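/- arXiv:math/0504442 — 3 statements merged into one kernel-verified Lean document; each statement's English description precedes it below -/
import Mathlib

section
/- Let W be real, gauge invariant, interchange-symmetric and smooth, and suppose v₀ = ū₀. Then the second Wirtinger derivatives of W evaluated at (u₀, ū₀, v₀, v̄₀) = (u₀, ū₀, ū₀, u₀) satisfy ∂²_{u₀ū₀}W = ∂²_{v₀v̄₀}W, ∂²_{ū₀²}W = ∂²_{v₀²}W, and ∂²_{u₀v₀}W = ∂²_{ū₀v̄₀}W. -/
open Complex

/-- Corollary 4: the second Wirtinger derivatives of a real, gauge-invariant,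
interchange-symmetric potential `W = F(|u|²+|v|², |u|²|v|², uv̄+vū)` evaluated
along `v = ū` satisfy the symmetry relations used for block-diagonalization. -/
theorem second_wirtinger_symmetries
    (F : ℂ → ℂ → ℂ → ℂ)
    (hF : ContDiff ℂ 2 (fun p : ℂ × ℂ × ℂ => F p.1 p.2.1 p.2.2))
    (W : ℂ → ℂ → ℂ → ℂ → ℂ)
    (hWdef : ∀ a b c d : ℂ, W a b c d = F (a * b + c * d) (a * b * (c * d)) (a * d + c * b))
    (D1 D2 D3 D4 : (ℂ → ℂ → ℂ → ℂ → ℂ) → (ℂ → ℂ → ℂ → ℂ → ℂ))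
    (hD1 : ∀ g a b c d, D1 g a b c d = deriv (fun z => g z b c d) a)
    (hD2 : ∀ g a b c d, D2 g a b c d = deriv (fun z => g a z c d) b)
    (hD3 : ∀ g a b c d, D3 g a b c d = deriv (fun z => g a b z d) c)
    (hD4 : ∀ g a b c d, D4 g a b c d = deriv (fun z => g a b c z) d) :
    ∀ u₀ : ℂ,
      D1 (D2 W) u₀ (starRingEnd ℂ u₀) (starRingEnd ℂ u₀) u₀ =
        D3 (D4 W) u₀ (starRingEnd ℂ u₀) (starRingEnd ℂ u₀) u₀ ∧
      D2 (D2 W) u₀ (starRingEnd ℂ u₀) (starRingEnd ℂ u₀) u₀ =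
        D3 (D3 W) u₀ (starRingEnd ℂ u₀) (starRingEnd ℂ u₀) u₀ ∧
      D1 (D3 W) u₀ (starRingEnd ℂ u₀) (starRingEnd ℂ u₀) u₀ =
        D2 (D4 W) u₀ (starRingEnd ℂ u₀) (starRingEnd ℂ u₀) u₀ := by
  intro u₀
  set Wf : ℂ × ℂ × ℂ × ℂ → ℂ := fun p =>
    F (p.1 * p.2.1 + p.2.2.1 * p.2.2.2) (p.1 * p.2.1 * (p.2.2.1 * p.2.2.2))
      (p.1 * p.2.2.2 + p.2.2.1 * p.2.1) with hWfdef
  have hg : ContDiff ℂ 2 (fun p : ℂ × ℂ × ℂ × ℂ =>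
      ((p.1 * p.2.1 + p.2.2.1 * p.2.2.2, p.1 * p.2.1 * (p.2.2.1 * p.2.2.2),
        p.1 * p.2.2.2 + p.2.2.1 * p.2.1) : ℂ × ℂ × ℂ)) := by fun_prop
  have hWf : ContDiff ℂ 2 Wf := hF.comp hg
  have hWeq : ∀ a b c d : ℂ, W a b c d = Wf (a, b, c, d) := by
    intro a b c d; rw [hWdef]
  have hd : Differentiable ℂ Wf := hWf.differentiable (by norm_num)
  have hd' : Differentiable ℂ (fderiv ℂ Wf) :=
    (hWf.fderiv_right (m := 1) (by norm_num)).differentiable (by norm_num)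
  -- first order partials via fderiv
  have keyA : ∀ (L : ℂ → ℂ × ℂ × ℂ × ℂ) (v : ℂ × ℂ × ℂ × ℂ), (∀ z, HasDerivAt L v z) →
      ∀ a, deriv (fun z => Wf (L z)) a = fderiv ℂ Wf (L a) v := by
    intro L v hL a
    have h := (hd (L a)).hasFDerivAt.comp_hasDerivAt a (hL a)
    simpa [Function.comp_def] using h.deriv
  -- second order mixed partials via fderiv of fderiv
  have keyB : ∀ (L : ℂ → ℂ × ℂ × ℂ × ℂ) (v : ℂ × ℂ × ℂ × ℂ), (∀ z, HasDerivAt L v z) →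
      ∀ (w : ℂ × ℂ × ℂ × ℂ) (a : ℂ),
      deriv (fun z => fderiv ℂ Wf (L z) w) a = fderiv ℂ (fderiv ℂ Wf) (L a) v w := by
    intro L v hL w a
    have h1 : HasDerivAt (fun z => fderiv ℂ Wf (L z)) (fderiv ℂ (fderiv ℂ Wf) (L a) v) a := by
      have h := (hd' (L a)).hasFDerivAt.comp_hasDerivAt a (hL a)
      simpa [Function.comp_def] using h
    have h2 := h1.clm_apply (hasDerivAt_const a w)
    simpa using h2.deriv
  -- line maps
  have hL2 : ∀ (a c d : ℂ) z, HasDerivAt (fun z : ℂ => ((a, z, c, d) : ℂ × ℂ × ℂ × ℂ))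
      ((0, 1, 0, 0) : ℂ × ℂ × ℂ × ℂ) z := fun a c d z =>
    (hasDerivAt_const _ _).prodMk ((hasDerivAt_id _).prodMk
      ((hasDerivAt_const _ _).prodMk (hasDerivAt_const _ _)))
  have hL3 : ∀ (a b d : ℂ) z, HasDerivAt (fun z : ℂ => ((a, b, z, d) : ℂ × ℂ × ℂ × ℂ))
      ((0, 0, 1, 0) : ℂ × ℂ × ℂ × ℂ) z := fun a b d z =>
    (hasDerivAt_const _ _).prodMk ((hasDerivAt_const _ _).prodMk
      ((hasDerivAt_id _).prodMk (hasDerivAt_const _ _)))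
  have hL4 : ∀ (a b c : ℂ) z, HasDerivAt (fun z : ℂ => ((a, b, c, z) : ℂ × ℂ × ℂ × ℂ))
      ((0, 0, 0, 1) : ℂ × ℂ × ℂ × ℂ) z := fun a b c z =>
    (hasDerivAt_const _ _).prodMk ((hasDerivAt_const _ _).prodMk
      ((hasDerivAt_const _ _).prodMk (hasDerivAt_id _)))
  -- first order partials of W
  have hD2' : ∀ a b c d : ℂ, D2 W a b c d = fderiv ℂ Wf (a, b, c, d) (0, 1, 0, 0) := by
    intro a b c d
    rw [hD2, show (fun z => W a z c d) = fun z => Wf (a, z, c, d) from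
      funext fun z => hWeq a z c d]
    exact keyA _ _ (hL2 a c d) b
  have hD3' : ∀ a b c d : ℂ, D3 W a b c d = fderiv ℂ Wf (a, b, c, d) (0, 0, 1, 0) := by
    intro a b c d
    rw [hD3, show (fun z => W a b z d) = fun z => Wf (a, b, z, d) from
      funext fun z => hWeq a b z d]
    exact keyA _ _ (hL3 a b d) c
  have hD4' : ∀ a b c d : ℂ, D4 W a b c d = fderiv ℂ Wf (a, b, c, d) (0, 0, 0, 1) := by
    intro a b c d
    rw [hD4, show (fun z => W a b c z) = fun z => Wf (a, b, c, z) from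
      funext fun z => hWeq a b c z]
    exact keyA _ _ (hL4 a b c) d
  -- second order mixed partials of W
  have hM43 : ∀ a b c d : ℂ, D4 (D3 W) a b c d =
      fderiv ℂ (fderiv ℂ Wf) (a, b, c, d) (0, 0, 0, 1) (0, 0, 1, 0) := by
    intro a b c d
    rw [hD4, show (fun z => D3 W a b c z) = fun z => fderiv ℂ Wf (a, b, c, z) (0, 0, 1, 0) from
      funext fun z => hD3' a b c z]
    exact keyB _ _ (hL4 a b c) _ d
  have hM34 : ∀ a b c d : ℂ, D3 (D4 W) a b c d =
      fderiv ℂ (fderiv ℂ Wf) (a, b, c, d) (0, 0, 1, 0) (0, 0, 0, 1) := by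
    intro a b c d
    rw [hD3, show (fun z => D4 W a b z d) = fun z => fderiv ℂ Wf (a, b, z, d) (0, 0, 0, 1) from
      funext fun z => hD4' a b z d]
    exact keyB _ _ (hL3 a b d) _ c
  have hM42 : ∀ a b c d : ℂ, D4 (D2 W) a b c d =
      fderiv ℂ (fderiv ℂ Wf) (a, b, c, d) (0, 0, 0, 1) (0, 1, 0, 0) := by
    intro a b c d
    rw [hD4, show (fun z => D2 W a b c z) = fun z => fderiv ℂ Wf (a, b, c, z) (0, 1, 0, 0) from
      funext fun z => hD2' a b c z]
    exact keyB _ _ (hL4 a b c) _ d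
  have hM24 : ∀ a b c d : ℂ, D2 (D4 W) a b c d =
      fderiv ℂ (fderiv ℂ Wf) (a, b, c, d) (0, 1, 0, 0) (0, 0, 0, 1) := by
    intro a b c d
    rw [hD2, show (fun z => D4 W a z c d) = fun z => fderiv ℂ Wf (a, z, c, d) (0, 0, 0, 1) from
      funext fun z => hD4' a z c d]
    exact keyB _ _ (hL2 a c d) _ b
  -- reversal symmetry of W
  have hσ : ∀ a b c d : ℂ, W a b c d = W d c b a := by
    intro a b c d
    rw [hWdef, hWdef]; ring_nf
  set v := starRingEnd ℂ u₀ with hv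
  -- Clairaut at the point (u₀, v, v, u₀)
  have hsymm : IsSymmSndFDerivAt ℂ Wf (u₀, v, v, u₀) :=
    hWf.contDiffAt.isSymmSndFDerivAt (by simp)
  refine ⟨?_, ?_, ?_⟩
  · -- D1 D2 = D4 D3 (by σ) = D3 D4 (by Clairaut)
    have h1 : D1 (D2 W) u₀ v v u₀ = D4 (D3 W) u₀ v v u₀ := by
      rw [hD1, hD4]
      congr 1
      funext z
      rw [hD2, hD3]
      congr 1
      funext y
      exact hσ z y v u₀
    rw [h1, hM43, hM34]
    exact hsymm _ _
  · -- D2 D2 = D3 D3 purely by σ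
    rw [hD2 (D2 W), hD3 (D3 W)]
    congr 1
    funext z
    rw [hD2, hD3]
    congr 1
    funext y
    exact hσ u₀ y v u₀
  · -- D1 D3 = D4 D2 (by σ), D2 D4 given; Clairaut
    have h1 : D1 (D3 W) u₀ v v u₀ = D4 (D2 W) u₀ v v u₀ := by
      rw [hD1, hD4]
      congr 1
      funext z
      rw [hD3, hD2]
      congr 1
      funext y
      exact hσ z v y u₀
    rw [h1, hM42, hM24]
    exact hsymm _ _
end

section
/- Let ω ∈ (−1,1), β = √(1−ω²), μ = (1−ω)/(1+ω), ρ > −1, and define u₀(x) = √(2(1−ω)/(1+ρ)) / (cosh(βx) + i√μ sinh(βx)). Then u₀ and v₀ = ū₀ solve the stationary system i u₀' = ω u₀ − v₀ + (1+ρ)|u₀|² u₀ (with the second equation being its complex conjugate), and u₀(x) → 0 as |x| → ∞. -/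
open Complex Filter

private lemma gap_frac1 {K : Type*} [Field K] (i a b s m c d e : K)
    (hd : d ≠ 0) (he : e ≠ 0) :
    i * ((0 * d - a * (s * b + i * m * (c * b))) / d ^ 2)
      = a * (-(i * b) * (s + i * m * c) * e) / (d ^ 2 * e) := by
  field_simp
  ring

private lemma gap_frac2 {K : Type*} [Field K] (a d e w p : K)
    (hd : d ≠ 0) (he : e ≠ 0) :
    a * (w * (d * e) - d ^ 2 + p * a ^ 2) / (d ^ 2 * e)
      = w * (a / d) - a / e + p * (a ^ 2 / (d * e)) * (a / d) := by
  field_simp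

/-- The explicit gap soliton for the quadric potential with `a₁ = 1`, `a₂ = ρ`,
`a₃ = a₄ = 0`: `u₀` (with `v₀ = ū₀`) solves the stationary system and decays. -/
theorem explicit_gap_soliton
    (ω ρ β μ : ℝ) (hω : ω ∈ Set.Ioo (-1 : ℝ) 1) (hρ : -1 < ρ)
    (hβ : β = Real.sqrt (1 - ω ^ 2)) (hμ : μ = (1 - ω) / (1 + ω))
    (u₀ : ℝ → ℂ)
    (hu₀ : ∀ x : ℝ, u₀ x = (Real.sqrt (2 * (1 - ω) / (1 + ρ)) : ℂ) /
      ((Real.cosh (β * x) : ℂ) + Complex.I * (Real.sqrt μ : ℂ) * (Real.sinh (β * x) : ℂ))) :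
    (∀ x : ℝ, Complex.I * deriv u₀ x =
      (ω : ℂ) * u₀ x - starRingEnd ℂ (u₀ x)
        + (1 + (ρ : ℂ)) * (Complex.normSq (u₀ x) : ℂ) * u₀ x) ∧
    (∀ x : ℝ, -Complex.I * deriv (fun y => starRingEnd ℂ (u₀ y)) x =
      (ω : ℂ) * starRingEnd ℂ (u₀ x) - u₀ x
        + (1 + (ρ : ℂ)) * (Complex.normSq (u₀ x) : ℂ) * starRingEnd ℂ (u₀ x)) ∧
    Tendsto u₀ atTop (nhds 0) ∧ Tendsto u₀ atBot (nhds 0) := by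
  obtain ⟨hω1, hω2⟩ := hω
  have h1ω : (0:ℝ) < 1 - ω := by linarith
  have h1ω' : (0:ℝ) < 1 + ω := by linarith
  have hρ' : (0:ℝ) < 1 + ρ := by linarith
  have hμpos : 0 < μ := by rw [hμ]; positivity
  set m := Real.sqrt μ with hm
  set A := Real.sqrt (2 * (1 - ω) / (1 + ρ)) with hA
  have hApos : 0 < A := Real.sqrt_pos.mpr (by positivity)
  have hm2 : m ^ 2 = μ := Real.sq_sqrt hμpos.le
  have hbm : β = m * (1 + ω) := by
    rw [hβ, hm, hμ, show (1 : ℝ) - ω ^ 2 = ((1-ω)/(1+ω)) * (1+ω)^2 by field_simp; ring,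
      Real.sqrt_mul (by positivity), Real.sqrt_sq h1ω'.le]
  have hβpos : 0 < β := by
    rw [hβ]; apply Real.sqrt_pos.mpr; nlinarith
  have hmw : m ^ 2 * (1 + ω) = 1 - ω := by rw [hm2, hμ]; field_simp
  have hA2 : (1 + ρ) * A ^ 2 = 2 * (1 - ω) := by
    rw [hA, Real.sq_sqrt (by positivity)]; field_simp
  have hu : u₀ = fun x => (A : ℂ) /
      ((Real.cosh (β * x) : ℂ) + Complex.I * (m : ℂ) * (Real.sinh (β * x) : ℂ)) :=
    funext hu₀
  subst hu
  -- nonvanishing of denominators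
  have hre : ∀ t : ℝ, ((Real.cosh t : ℂ) + Complex.I * (m : ℂ) * (Real.sinh t : ℂ)).re
      = Real.cosh t := by
    intro t
    simp only [Complex.add_re, Complex.mul_re, Complex.mul_im, Complex.I_re, Complex.I_im,
      Complex.ofReal_re, Complex.ofReal_im]
    ring
  have hD0 : ∀ t : ℝ, ((Real.cosh t : ℂ) + Complex.I * (m : ℂ) * (Real.sinh t : ℂ)) ≠ 0 := by
    intro t h
    have h2 := congrArg Complex.re h
    rw [hre t] at h2
    simp at h2
    nlinarith [Real.cosh_pos t]
  have hE0 : ∀ t : ℝ, ((Real.cosh t : ℂ) - Complex.I * (m : ℂ) * (Real.sinh t : ℂ)) ≠ 0 := by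
    intro t h
    have h2 := congrArg Complex.re h
    simp only [Complex.sub_re, Complex.mul_re, Complex.mul_im, Complex.I_re, Complex.I_im,
      Complex.ofReal_re, Complex.ofReal_im, Complex.zero_re] at h2
    nlinarith [Real.cosh_pos t]
  -- derivative
  have hder : ∀ x : ℝ, HasDerivAt
      (fun x => (A : ℂ) / ((Real.cosh (β * x) : ℂ) + Complex.I * (m : ℂ) * (Real.sinh (β * x) : ℂ)))
      ((0 * ((Real.cosh (β * x) : ℂ) + Complex.I * (m : ℂ) * (Real.sinh (β * x) : ℂ))
        - (A : ℂ) * ((Real.sinh (β * x) * β : ℝ) + Complex.I * (m : ℂ) * (Real.cosh (β * x) * β : ℝ)))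
        / ((Real.cosh (β * x) : ℂ) + Complex.I * (m : ℂ) * (Real.sinh (β * x) : ℂ)) ^ 2) x := by
    intro x
    have hlin : HasDerivAt (fun y : ℝ => β * y) β x := by
      simpa using (hasDerivAt_id x).const_mul β
    have hcosh := (hlin.cosh).ofReal_comp
    have hsinh := (hlin.sinh).ofReal_comp
    have hD := hcosh.add (hsinh.const_mul (Complex.I * (m : ℂ)))
    exact (hasDerivAt_const x (A : ℂ)).div hD (hD0 (β * x))
  -- conjugate of u₀
  have hconj : ∀ x : ℝ,
      (starRingEnd ℂ) ((A : ℂ) / ((Real.cosh (β * x) : ℂ) + Complex.I * (m : ℂ) * (Real.sinh (β * x) : ℂ)))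
      = (A : ℂ) / ((Real.cosh (β * x) : ℂ) - Complex.I * (m : ℂ) * (Real.sinh (β * x) : ℂ)) := by
    intro x
    rw [map_div₀]
    simp only [map_add, map_mul, Complex.conj_I, Complex.conj_ofReal]
    ring
  -- normSq of u₀
  have hnsq : ∀ x : ℝ,
      ((Complex.normSq ((A : ℂ) / ((Real.cosh (β * x) : ℂ) + Complex.I * (m : ℂ) * (Real.sinh (β * x) : ℂ)))) : ℂ)
      = (A : ℂ) ^ 2 / (((Real.cosh (β * x) : ℂ) + Complex.I * (m : ℂ) * (Real.sinh (β * x) : ℂ))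
          * ((Real.cosh (β * x) : ℂ) - Complex.I * (m : ℂ) * (Real.sinh (β * x) : ℂ))) := by
    intro x
    rw [← Complex.mul_conj, hconj x]
    rw [div_mul_div_comm]
    ring_nf
  -- the key algebraic identity
  have key : ∀ x : ℝ,
      -(Complex.I * (β : ℂ)) * ((Real.sinh (β * x) : ℂ) + Complex.I * (m : ℂ) * (Real.cosh (β * x) : ℂ))
        * ((Real.cosh (β * x) : ℂ) - Complex.I * (m : ℂ) * (Real.sinh (β * x) : ℂ))
      = (ω : ℂ) * (((Real.cosh (β * x) : ℂ) + Complex.I * (m : ℂ) * (Real.sinh (β * x) : ℂ))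
            * ((Real.cosh (β * x) : ℂ) - Complex.I * (m : ℂ) * (Real.sinh (β * x) : ℂ)))
        - ((Real.cosh (β * x) : ℂ) + Complex.I * (m : ℂ) * (Real.sinh (β * x) : ℂ)) ^ 2
        + (1 + (ρ : ℂ)) * (A : ℂ) ^ 2 := by
    intro x
    have hcs : ((Real.cosh (β * x) : ℝ) : ℂ) ^ 2 - ((Real.sinh (β * x) : ℝ) : ℂ) ^ 2 = 1 := by
      exact_mod_cast congrArg (fun t : ℝ => (t : ℂ)) (Real.cosh_sq_sub_sinh_sq (β * x))
    have hbC : (β : ℂ) = (m : ℂ) * (1 + (ω : ℂ)) := by exact_mod_cast congrArg (fun t : ℝ => (t : ℂ)) hbm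
    have hmwC : (m : ℂ) ^ 2 * (1 + (ω : ℂ)) = 1 - (ω : ℂ) := by
      exact_mod_cast congrArg (fun t : ℝ => (t : ℂ)) hmw
    have hAC : (1 + (ρ : ℂ)) * (A : ℂ) ^ 2 = 2 * (1 - (ω : ℂ)) := by
      exact_mod_cast congrArg (fun t : ℝ => (t : ℂ)) hA2
    set C := ((Real.cosh (β * x) : ℝ) : ℂ)
    set S := ((Real.sinh (β * x) : ℝ) : ℂ)
    set M := ((m : ℝ) : ℂ)
    linear_combination
      (-(Complex.I * S * C) - Complex.I ^ 2 * M * (C ^ 2 - S ^ 2)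
          + Complex.I ^ 3 * M ^ 2 * C * S) * hbC
      + (M ^ 2 * (1 + (ω : ℂ)) * (-(C ^ 2 - S ^ 2) + Complex.I * M * C * S + S ^ 2)) * Complex.I_sq
      + (C ^ 2 - 2 * S ^ 2 - Complex.I * M * C * S) * hmwC
      - hAC
      + (2 * (1 - (ω : ℂ))) * hcs
  have eq1 : ∀ x : ℝ, Complex.I * deriv
      (fun x => (A : ℂ) / ((Real.cosh (β * x) : ℂ) + Complex.I * (m : ℂ) * (Real.sinh (β * x) : ℂ))) x =
      (ω : ℂ) * ((A : ℂ) / ((Real.cosh (β * x) : ℂ) + Complex.I * (m : ℂ) * (Real.sinh (β * x) : ℂ)))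
      - starRingEnd ℂ ((A : ℂ) / ((Real.cosh (β * x) : ℂ) + Complex.I * (m : ℂ) * (Real.sinh (β * x) : ℂ)))
      + (1 + (ρ : ℂ)) * ((Complex.normSq ((A : ℂ) / ((Real.cosh (β * x) : ℂ) + Complex.I * (m : ℂ) * (Real.sinh (β * x) : ℂ)))) : ℂ)
        * ((A : ℂ) / ((Real.cosh (β * x) : ℂ) + Complex.I * (m : ℂ) * (Real.sinh (β * x) : ℂ))) := by
    intro x
    have hD := hD0 (β * x)
    have hE := hE0 (β * x)
    rw [(hder x).deriv, hconj x, hnsq x, Complex.ofReal_mul, Complex.ofReal_mul]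
    calc Complex.I * ((0 * ((Real.cosh (β * x) : ℂ) + Complex.I * (m : ℂ) * (Real.sinh (β * x) : ℂ))
          - (A : ℂ) * ((Real.sinh (β * x) : ℂ) * (β : ℂ)
              + Complex.I * (m : ℂ) * ((Real.cosh (β * x) : ℂ) * (β : ℂ))))
          / ((Real.cosh (β * x) : ℂ) + Complex.I * (m : ℂ) * (Real.sinh (β * x) : ℂ)) ^ 2)
        = (A : ℂ) * (-(Complex.I * (β : ℂ)) * ((Real.sinh (β * x) : ℂ) + Complex.I * (m : ℂ) * (Real.cosh (β * x) : ℂ))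
              * ((Real.cosh (β * x) : ℂ) - Complex.I * (m : ℂ) * (Real.sinh (β * x) : ℂ)))
            / (((Real.cosh (β * x) : ℂ) + Complex.I * (m : ℂ) * (Real.sinh (β * x) : ℂ)) ^ 2
              * ((Real.cosh (β * x) : ℂ) - Complex.I * (m : ℂ) * (Real.sinh (β * x) : ℂ))) :=
          gap_frac1 _ _ _ _ _ _ _ _ hD hE
      _ = (A : ℂ) * ((ω : ℂ) * (((Real.cosh (β * x) : ℂ) + Complex.I * (m : ℂ) * (Real.sinh (β * x) : ℂ))
              * ((Real.cosh (β * x) : ℂ) - Complex.I * (m : ℂ) * (Real.sinh (β * x) : ℂ)))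
            - ((Real.cosh (β * x) : ℂ) + Complex.I * (m : ℂ) * (Real.sinh (β * x) : ℂ)) ^ 2
            + (1 + (ρ : ℂ)) * (A : ℂ) ^ 2)
            / (((Real.cosh (β * x) : ℂ) + Complex.I * (m : ℂ) * (Real.sinh (β * x) : ℂ)) ^ 2
              * ((Real.cosh (β * x) : ℂ) - Complex.I * (m : ℂ) * (Real.sinh (β * x) : ℂ))) := by
          rw [key x]
      _ = _ := gap_frac2 _ _ _ _ _ hD hE
  refine ⟨eq1, ?_, ?_, ?_⟩
  · intro x
    have hcd : HasDerivAt (fun y => (starRingEnd ℂ)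
        ((A : ℂ) / ((Real.cosh (β * y) : ℂ) + Complex.I * (m : ℂ) * (Real.sinh (β * y) : ℂ))))
        ((starRingEnd ℂ) ((0 * ((Real.cosh (β * x) : ℂ) + Complex.I * (m : ℂ) * (Real.sinh (β * x) : ℂ))
        - (A : ℂ) * ((Real.sinh (β * x) * β : ℝ) + Complex.I * (m : ℂ) * (Real.cosh (β * x) * β : ℝ)))
        / ((Real.cosh (β * x) : ℂ) + Complex.I * (m : ℂ) * (Real.sinh (β * x) : ℂ)) ^ 2)) x := by
      have h := Complex.conjCLE.hasFDerivAt.comp_hasDerivAt x (hder x)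
      simpa only [Function.comp_def, ContinuousLinearEquiv.coe_coe, Complex.conjCLE_apply] using h
    rw [hcd.deriv]
    have h1 := eq1 x
    rw [(hder x).deriv] at h1
    have h2 := congrArg (starRingEnd ℂ) h1
    simp only [map_add, map_sub, map_mul, Complex.conj_conj, Complex.conj_ofReal, Complex.conj_I,
      map_one] at h2 ⊢
    linear_combination h2
  · -- atTop
    have hb : ∀ x : ℝ, ‖(A : ℂ) / ((Real.cosh (β * x) : ℂ) + Complex.I * (m : ℂ) * (Real.sinh (β * x) : ℂ))‖
        ≤ A / Real.cosh (β * x) := by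
      intro x
      rw [norm_div]
      have h1 : ‖((A : ℝ) : ℂ)‖ = A := by
        rw [Complex.norm_real, Real.norm_eq_abs, abs_of_pos hApos]
      rw [h1]
      have h2 : Real.cosh (β * x) ≤ ‖(Real.cosh (β * x) : ℂ) + Complex.I * (m : ℂ) * (Real.sinh (β * x) : ℂ)‖ := by
        have h3 := Complex.abs_re_le_norm ((Real.cosh (β * x) : ℂ) + Complex.I * (m : ℂ) * (Real.sinh (β * x) : ℂ))
        rw [hre (β * x)] at h3
        calc Real.cosh (β * x) ≤ |Real.cosh (β * x)| := le_abs_self _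
          _ ≤ _ := by exact h3
      gcongr
      -- side goals closed by gcongr
    have hct : Tendsto (fun x : ℝ => Real.cosh (β * x)) atTop atTop := by
      have h2 : Tendsto (fun x : ℝ => Real.exp (β * x) / 2) atTop atTop := by
        have h3 := (Real.tendsto_exp_atTop.comp (tendsto_id.const_mul_atTop hβpos)).atTop_div_const
          (two_pos : (0:ℝ) < 2)
        simpa only [Function.comp_def, id_eq] using h3
      apply tendsto_atTop_mono (fun x => ?_) h2
      rw [Real.cosh_eq]
      have h4 := Real.exp_pos (-(β * x))
      linarith
    exact squeeze_zero_norm hb (tendsto_const_nhds.div_atTop hct)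
  · have hb : ∀ x : ℝ, ‖(A : ℂ) / ((Real.cosh (β * x) : ℂ) + Complex.I * (m : ℂ) * (Real.sinh (β * x) : ℂ))‖
        ≤ A / Real.cosh (β * x) := by
      intro x
      rw [norm_div]
      have h1 : ‖((A : ℝ) : ℂ)‖ = A := by
        rw [Complex.norm_real, Real.norm_eq_abs, abs_of_pos hApos]
      rw [h1]
      have h2 : Real.cosh (β * x) ≤ ‖(Real.cosh (β * x) : ℂ) + Complex.I * (m : ℂ) * (Real.sinh (β * x) : ℂ)‖ := by
        have h3 := Complex.abs_re_le_norm ((Real.cosh (β * x) : ℂ) + Complex.I * (m : ℂ) * (Real.sinh (β * x) : ℂ))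
        rw [hre (β * x)] at h3
        calc Real.cosh (β * x) ≤ |Real.cosh (β * x)| := le_abs_self _
          _ ≤ _ := by exact h3
      gcongr
      -- side goals closed by gcongr
    have hct : Tendsto (fun x : ℝ => Real.cosh (β * x)) atBot atTop := by
      have h2 : Tendsto (fun x : ℝ => Real.exp (-(β * x)) / 2) atBot atTop := by
        have h3 := ((Real.tendsto_exp_atTop.comp
          (tendsto_neg_atBot_atTop.comp (tendsto_id.const_mul_atBot hβpos))).atTop_div_const
          (two_pos : (0:ℝ) < 2))
        simpa only [Function.comp_def, id_eq] using h3
      apply tendsto_atTop_mono (fun x => ?_) h2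
      rw [Real.cosh_eq]
      have h4 := Real.exp_pos (β * x)
      linarith
    exact squeeze_zero_norm hb (tendsto_const_nhds.div_atTop hct)
end

section
/- On the zero level set of the first integral (E = 0 with Q > 0), the angle variable of the system in the previous lemma satisfies the decoupled ODE Θ'(x) = (n−1)(ω − cos(2Θ)), and Q is recovered from Θ by Q^{n−1} = (cos(2Θ) − ω) / (Σ_{s=0}^{n} A_s cos(2sΘ)), provided the denominator is nonzero. -/
open Real

theorem pow_pred_mul_eq_sub_of_first_integral_eq_zero {R : Type*} [CommRing R] [IsDomain R]
    {n : ℕ} (hn : 1 ≤ n) {q c ω S : R} (hq : q ≠ 0) (h : -ω * q + q * c - q ^ n * S = 0) :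
    q ^ (n - 1) * S = c - ω := by
  have hpow : q ^ n = q * q ^ (n - 1) := by rw [← pow_succ', Nat.sub_add_cancel hn]
  have hfactor : q * (c - ω - q ^ (n - 1) * S) = 0 := by
    rw [← h, hpow]
    ring
  exact (sub_eq_zero.1 ((mul_eq_zero.1 hfactor).resolve_left hq)).symm

theorem zero_level_reduction_general
    (n : ℕ) (hn : 2 ≤ n) (A : ℕ → ℝ) (ω : ℝ)
    (Q Θ : ℝ → ℝ)
    (hQpos : ∀ x : ℝ, 0 < Q x)
    (hΘ' : ∀ x : ℝ, deriv Θ x = -ω + Real.cos (2 * Θ x)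
      - n * Q x ^ (n - 1) * ∑ s ∈ Finset.range (n + 1), A s * Real.cos (2 * s * Θ x))
    (hE : ∀ x : ℝ, -ω * Q x + Q x * Real.cos (2 * Θ x)
      - Q x ^ n * ∑ s ∈ Finset.range (n + 1), A s * Real.cos (2 * s * Θ x) = 0) :
    ∀ x : ℝ,
      deriv Θ x = (n - 1 : ℝ) * (ω - Real.cos (2 * Θ x)) ∧
      ((∑ s ∈ Finset.range (n + 1), A s * Real.cos (2 * s * Θ x)) ≠ 0 →
        Q x ^ (n - 1) = (Real.cos (2 * Θ x) - ω) /
          (∑ s ∈ Finset.range (n + 1), A s * Real.cos (2 * s * Θ x))) := by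
  intro x
  have hlevel := pow_pred_mul_eq_sub_of_first_integral_eq_zero (by omega) (hQpos x).ne' (hE x)
  refine ⟨?_, fun hsum => ?_⟩
  · rw [hΘ' x, mul_assoc, hlevel]
    ring
  · rw [eq_div_iff hsum, hlevel]

/-- On the zero level set of the first integral with `Q > 0`, the angle
variable decouples: `Θ' = (n−1)(ω − cos 2Θ)`, and `Q` is recovered from `Θ`. -/
theorem zero_level_reduction
    (n : ℕ) (hn : 2 ≤ n) (A : ℕ → ℝ) (ω : ℝ)
    (Q Θ : ℝ → ℝ) (hQ : Differentiable ℝ Q) (hΘ : Differentiable ℝ Θ)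
    (hQpos : ∀ x : ℝ, 0 < Q x)
    (hQ' : ∀ x : ℝ, deriv Q x = 2 * Q x * Real.sin (2 * Θ x)
      - 2 * Q x ^ n * ∑ s ∈ Finset.range (n + 1), (s : ℝ) * A s * Real.sin (2 * s * Θ x))
    (hΘ' : ∀ x : ℝ, deriv Θ x = -ω + Real.cos (2 * Θ x)
      - n * Q x ^ (n - 1) * ∑ s ∈ Finset.range (n + 1), A s * Real.cos (2 * s * Θ x))
    (hE : ∀ x : ℝ, -ω * Q x + Q x * Real.cos (2 * Θ x)
      - Q x ^ n * ∑ s ∈ Finset.range (n + 1), A s * Real.cos (2 * s * Θ x) = 0) :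
    ∀ x : ℝ,
      deriv Θ x = (n - 1 : ℝ) * (ω - Real.cos (2 * Θ x)) ∧
      ((∑ s ∈ Finset.range (n + 1), A s * Real.cos (2 * s * Θ x)) ≠ 0 →
        Q x ^ (n - 1) = (Real.cos (2 * Θ x) - ω) /
          (∑ s ∈ Finset.range (n + 1), A s * Real.cos (2 * s * Θ x))) :=
  zero_level_reduction_general n hn A ω Q Θ hQpos hΘ' hE
end
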